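/- Let Σ be a finite nonempty alphabet, φ ⊆ TΣ^ω, and let A be a complete and deterministic TBA with a single initial location and L(A) = φ ∩ T_DΣ^ω. Then for every finite timed word ρ ∈ TΣ^*: d_A(Terminal(A, ρ)) = D^ρ_{φ̄}, where D^ρ_{φ̄} = inf{τ(ρ') : ρ' ∈ TΣ^* and ρ·ρ'·μ ∉ φ for all μ ∈ T_DΣ^ω} (infimum in [0,+∞], inf ∅ = +∞). (The equality case of Theorem 4 for deterministic automata.) -/
import Mathlib


open Filter

/-! ## Timed words -/

/-- An infinite timed word: a symbol sequence and a timestamp sequence (positions 0,1,2,…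
correspond to the paper's positions 1,2,3,…; the convention τ₀ = 0 is used in definitions). -/
abbrev InfTW (α : Type) := (ℕ → α) × (ℕ → ℝ)

/-- `ρ` is a genuine infinite timed word: timestamps are strictly increasing
non-negative reals (strictly above the conventional τ₀ = 0). -/
def IsInfTW {α : Type} (ρ : InfTW α) : Prop := 0 < ρ.2 0 ∧ StrictMono ρ.2

/-- Time divergent infinite timed words. -/
def IsDivergent {α : Type} (ρ : InfTW α) : Prop := IsInfTW ρ ∧ Tendsto ρ.2 atTop atTop

/-- A finite timed word with `len + 1` letters, at positions `0,…,len`. -/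
structure FinTW (α : Type) where
  len : ℕ
  sym : ℕ → α
  time : ℕ → ℝ

/-- `ρ` is a genuine finite timed word: `0 < τ₁ < … < τ_n`. -/
def IsFinTW {α : Type} (ρ : FinTW α) : Prop :=
  0 < ρ.time 0 ∧ ∀ i < ρ.len, ρ.time i < ρ.time (i + 1)

/-- Duration of a finite timed word. -/
def FinTW.dur {α : Type} (ρ : FinTW α) : ℝ := ρ.time ρ.len

/-- Concatenation of a finite timed word with an infinite timed word
(timestamps of the suffix are shifted by the duration). -/
def FinTW.catInf {α : Type} (ρ : FinTW α) (μ : InfTW α) : InfTW α :=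
  (fun i => if i ≤ ρ.len then ρ.sym i else μ.1 (i - ρ.len - 1),
   fun i => if i ≤ ρ.len then ρ.time i else ρ.dur + μ.2 (i - ρ.len - 1))

/-- Concatenation of two finite timed words. -/
def FinTW.catFin {α : Type} (ρ ρ' : FinTW α) : FinTW α where
  len := ρ.len + 1 + ρ'.len
  sym := fun i => if i ≤ ρ.len then ρ.sym i else ρ'.sym (i - ρ.len - 1)
  time := fun i => if i ≤ ρ.len then ρ.time i else ρ.dur + ρ'.time (i - ρ.len - 1)

/-! ## Timed Büchi automata -/

/-- Comparison operators for clock constraints. -/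
inductive Cmp where
  | lt
  | le
  | eq
  | ge
  | gt

def Cmp.sat : Cmp → ℝ → ℕ → Prop
  | .lt, x, n => x < n
  | .le, x, n => x ≤ n
  | .eq, x, n => x = n
  | .ge, x, n => (n : ℝ) ≤ x
  | .gt, x, n => (n : ℝ) < x

/-- Clock constraints: finite conjunctions of atoms `c ∼ n`. -/
inductive CC (C : Type) where
  | tt : CC C
  | atom : C → Cmp → ℕ → CC C
  | and : CC C → CC C → CC C

/-- Satisfaction of a clock constraint by a clock valuation. -/
def CC.sat {C : Type} (v : C → ℝ) : CC C → Prop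
  | .tt => True
  | .atom c op n => op.sat (v c) n
  | .and g g' => g.sat v ∧ g'.sat v

/-- Renaming of clocks in a clock constraint. -/
def CC.map {C D : Type} (f : C → D) : CC C → CC D
  | .tt => .tt
  | .atom c op n => .atom (f c) op n
  | .and g g' => .and (g.map f) (g'.map f)

/-- A transition of a TBA. -/
structure TBATrans (α Q C : Type) where
  src : Q
  dst : Q
  sym : α
  reset : Set C
  guard : CC C

/-- A timed Büchi automaton over alphabet `α` with locations `Q` and clocks `C`
(finiteness of `α`, `Q`, `C` and of the transition set is assumed where needed). -/
structure TBA (α Q C : Type) where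
  init : Set Q
  trans : Set (TBATrans α Q C)
  final : Set Q

/-- A state of a TBA: a location together with a clock valuation. -/
abbrev TState (Q C : Type) := Q × (C → ℝ)

/-- `A.step s d a s'`: from state `s`, delaying `d` and reading `a`, the automaton can
move to state `s'` via some transition whose guard is satisfied by `s.2 + d`,
resetting the clocks in the reset set. -/
def TBA.step {α Q C : Type} (A : TBA α Q C) (s : TState Q C) (d : ℝ) (a : α)
    (s' : TState Q C) : Prop :=
  ∃ t ∈ A.trans, t.src = s.1 ∧ t.dst = s'.1 ∧ t.sym = a ∧
    t.guard.sat (fun c => s.2 c + d) ∧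
    (∀ c ∈ t.reset, s'.2 c = 0) ∧ (∀ c ∉ t.reset, s'.2 c = s.2 c + d)

/-- `prevT τ i` is τ_{i-1} with the convention τ₀ = 0 (0-indexed: position `i` of the
word has predecessor timestamp `prevT τ i`). -/
def prevT (τ : ℕ → ℝ) (i : ℕ) : ℝ := if i = 0 then 0 else τ (i - 1)

/-- `r` is a run of `A` on the infinite timed word `ρ` (from the state `r 0`). -/
def TBA.InfRun {α Q C : Type} (A : TBA α Q C) (ρ : InfTW α) (r : ℕ → TState Q C) : Prop :=
  ∀ i, A.step (r i) (ρ.2 i - prevT ρ.2 i) (ρ.1 i) (r (i + 1))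

/-- `r` is an accepting run of `A` on `ρ`: some accepting location occurs infinitely often. -/
def TBA.AccRun {α Q C : Type} (A : TBA α Q C) (ρ : InfTW α) (r : ℕ → TState Q C) : Prop :=
  A.InfRun ρ r ∧ ∃ q ∈ A.final, ∀ n, ∃ m, n ≤ m ∧ (r m).1 = q

/-- The language of `A` from a state `s`. -/
def TBA.Lang {α Q C : Type} (A : TBA α Q C) (s : TState Q C) : Set (InfTW α) :=
  {ρ | IsInfTW ρ ∧ ∃ r, r 0 = s ∧ A.AccRun ρ r}

/-- The language of `A` (from its initial locations, with all clocks 0). -/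
def TBA.LangInit {α Q C : Type} (A : TBA α Q C) : Set (InfTW α) :=
  {ρ | ∃ q ∈ A.init, ρ ∈ A.Lang (q, fun _ => 0)}

/-- `r` is a run of `A` over the finite timed word `ρ` (from the state `r 0`),
consisting of steps `r 0, …, r (ρ.len + 1)`. -/
def TBA.FinRun {α Q C : Type} (A : TBA α Q C) (ρ : FinTW α) (r : ℕ → TState Q C) : Prop :=
  ∀ i ≤ ρ.len, A.step (r i) (ρ.time i - prevT ρ.time i) (ρ.sym i) (r (i + 1))

/-- The state estimate `Terminal(A, ρ)`: all states reachable by a run of `A` over `ρ`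
from some initial state (initial location, all clocks 0). -/
def TBA.Terminal {α Q C : Type} (A : TBA α Q C) (ρ : FinTW α) : Set (TState Q C) :=
  {s | ∃ r : ℕ → TState Q C, (r 0).1 ∈ A.init ∧ (∀ c, (r 0).2 c = 0) ∧
        A.FinRun ρ r ∧ r (ρ.len + 1) = s}

/-- `NonEmpty(A)`: the states of `A` with a non-empty language. -/
def TBA.NonEmptySt {α Q C : Type} (A : TBA α Q C) : Set (TState Q C) :=
  {s | (A.Lang s).Nonempty}

/-! ## Statements 5/6 preliminaries -/

/-- One timed step together with accumulated elapsed time. -/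
def TBA.stepT {α Q C : Type} (A : TBA α Q C) (p p' : TState Q C × ℝ) : Prop :=
  ∃ d, 0 < d ∧ (∃ a, A.step p.1 d a p'.1) ∧ p'.2 = p.2 + d

/-- `d_A(q,v)`: the infimum (in `[0,∞]`) of total elapsed times `d₁ + … + d_k + d`
after which a state outside `NonEmpty(A)` can be reached from `(q,v)` by timed steps
followed by a delay `d ≥ 0`. -/
noncomputable def TBA.dState {α Q C : Type} (A : TBA α Q C) (s : TState Q C) : ENNReal :=
  sInf {c | ∃ (s' : TState Q C) (t d : ℝ),
    Relation.ReflTransGen A.stepT (s, 0) (s', t) ∧ 0 ≤ d ∧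
    (s'.1, fun x => s'.2 x + d) ∉ A.NonEmptySt ∧ c = ENNReal.ofReal (t + d)}

/-- `d_A(S)` for a set `S` of states (sup ∅ = 0). -/
noncomputable def TBA.dSet {α Q C : Type} (A : TBA α Q C) (S : Set (TState Q C)) : ENNReal :=
  ⨆ s ∈ S, A.dState s

/-- `D^ρ_{φ̄}`: the infimum (in `[0,∞]`, inf ∅ = ∞) of durations of finite continuations
`ρ'` such that every divergent continuation of `ρ·ρ'` avoids `φ`. -/
noncomputable def Dbar {α : Type} (φ : Set (InfTW α)) (ρ : FinTW α) : ENNReal :=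
  sInf {c | ∃ ρ' : FinTW α, IsFinTW ρ' ∧
    (∀ μ, IsDivergent μ → (ρ.catFin ρ').catInf μ ∉ φ) ∧ c = ENNReal.ofReal ρ'.dur}

/-- `D^ρ_φ`: the infimum (in `[0,∞]`, inf ∅ = ∞) of durations of finite continuations
`ρ'` such that every divergent continuation of `ρ·ρ'` lies in `φ`. -/
noncomputable def Dphi {α : Type} (φ : Set (InfTW α)) (ρ : FinTW α) : ENNReal :=
  sInf {c | ∃ ρ' : FinTW α, IsFinTW ρ' ∧
    (∀ μ, IsDivergent μ → (ρ.catFin ρ').catInf μ ∈ φ) ∧ c = ENNReal.ofReal ρ'.dur}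

/-- `A` is complete: in every state, for every symbol and positive delay,
some transition is enabled. -/
def TBA.Complete {α Q C : Type} (A : TBA α Q C) : Prop :=
  ∀ (s : TState Q C) (a : α) (d : ℝ), 0 < d →
    ∃ t ∈ A.trans, t.src = s.1 ∧ t.sym = a ∧ t.guard.sat (fun c => s.2 c + d)

/-- `A` is deterministic: in every state, for every symbol and positive delay,
at most one transition is enabled. -/
def TBA.Deterministic {α Q C : Type} (A : TBA α Q C) : Prop :=
  ∀ (s : TState Q C) (a : α) (d : ℝ), 0 < d →
    ∀ t1 ∈ A.trans, ∀ t2 ∈ A.trans,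
      t1.src = s.1 → t2.src = s.1 → t1.sym = a → t2.sym = a →
      t1.guard.sat (fun c => s.2 c + d) → t2.guard.sat (fun c => s.2 c + d) → t1 = t2

/-! ## Auxiliary development -/

section Aux

variable {α Q C : Type} {A : TBA α Q C}

open Classical in
/-- A choice of successor state. -/
noncomputable def TBA.nxt (A : TBA α Q C) (s : TState Q C) (d : ℝ) (a : α) : TState Q C :=
  if h : ∃ s', A.step s d a s' then h.choose else s

open Classical in
lemma TBA.nxt_step (hcomp : A.Complete) (s : TState Q C) (a : α) {d : ℝ} (hd : 0 < d) :
    A.step s d a (A.nxt s d a) := by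
  obtain ⟨t, ht, hsrc, hsym, hg⟩ := hcomp s a d hd
  have h : ∃ s', A.step s d a s' :=
    ⟨(t.dst, fun c => if c ∈ t.reset then 0 else s.2 c + d),
      t, ht, hsrc, rfl, hsym, hg, fun c hc => if_pos hc, fun c hc => if_neg hc⟩
  rw [TBA.nxt, dif_pos h]
  exact h.choose_spec

lemma step_unique (hdet : A.Deterministic) {s s1 s2 : TState Q C} {d : ℝ} {a : α}
    (hd : 0 < d) (h1 : A.step s d a s1) (h2 : A.step s d a s2) : s1 = s2 := by
  obtain ⟨t1, ht1, hsrc1, hdst1, hsym1, hg1, hr1, hn1⟩ := h1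
  obtain ⟨t2, ht2, hsrc2, hdst2, hsym2, hg2, hr2, hn2⟩ := h2
  have heq : t1 = t2 := hdet s a d hd t1 ht1 t2 ht2 hsrc1 hsrc2 hsym1 hsym2 hg1 hg2
  subst heq
  apply Prod.ext
  · rw [← hdst1, ← hdst2]
  · funext c
    by_cases hc : c ∈ t1.reset
    · rw [hr1 c hc, hr2 c hc]
    · rw [hn1 c hc, hn2 c hc]

lemma delay_pos {ρ : FinTW α} (hρ : IsFinTW ρ) {i : ℕ} (hi : i ≤ ρ.len) :
    0 < ρ.time i - prevT ρ.time i := by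
  rcases Nat.eq_zero_or_pos i with h0 | h0
  · subst h0; simp [prevT]; exact hρ.1
  · have h1 : prevT ρ.time i = ρ.time (i - 1) := by simp only [prevT, if_neg (by omega : ¬ i = 0)]
    have h2 : ρ.time (i - 1) < ρ.time (i - 1 + 1) := hρ.2 (i - 1) (by omega)
    have h3 : i - 1 + 1 = i := by omega
    rw [h1]; rw [h3] at h2; linarith

lemma time_pos {ρ : FinTW α} (hρ : IsFinTW ρ) {i : ℕ} (hi : i ≤ ρ.len) : 0 < ρ.time i := by
  induction i with
  | zero => exact hρ.1
  | succ n ih =>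
    have := hρ.2 n (by omega)
    have := ih (by omega)
    linarith

lemma dur_pos {ρ : FinTW α} (hρ : IsFinTW ρ) : 0 < ρ.dur := time_pos hρ le_rfl

/-- The run of `A` on a finite timed word from a given state, chosen via `nxt`. -/
noncomputable def runFrom (A : TBA α Q C) (s : TState Q C) (ρ : FinTW α) : ℕ → TState Q C
  | 0 => s
  | (i+1) => A.nxt (runFrom A s ρ i) (ρ.time i - prevT ρ.time i) (ρ.sym i)

lemma runFrom_zero {s : TState Q C} {ρ : FinTW α} : runFrom A s ρ 0 = s := rfl

lemma runFrom_isRun (hcomp : A.Complete) {ρ : FinTW α} (hρ : IsFinTW ρ) (s : TState Q C) :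
    A.FinRun ρ (runFrom A s ρ) := by
  intro i hi
  exact TBA.nxt_step hcomp _ _ (delay_pos hρ hi)

lemma finRun_unique (hdet : A.Deterministic) {ρ : FinTW α} (hρ : IsFinTW ρ)
    {r1 r2 : ℕ → TState Q C} (h1 : A.FinRun ρ r1) (h2 : A.FinRun ρ r2)
    (h0 : r1 0 = r2 0) : ∀ i ≤ ρ.len + 1, r1 i = r2 i := by
  intro i hi
  induction i with
  | zero => exact h0
  | succ n ih =>
    have hn : n ≤ ρ.len := by omega
    have heq := ih (by omega)
    have s1 := h1 n hn
    have s2 := h2 n hn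
    rw [heq] at s1
    exact step_unique hdet (delay_pos hρ hn) s1 s2

section CatLemmas

variable {α Q C : Type} {A : TBA α Q C} {ρ ρ' : FinTW α} {ν μ : InfTW α}

lemma catInf_sym_le {i : ℕ} (hi : i ≤ ρ.len) : (ρ.catInf ν).1 i = ρ.sym i := if_pos hi

lemma catInf_time_le {i : ℕ} (hi : i ≤ ρ.len) : (ρ.catInf ν).2 i = ρ.time i := if_pos hi

lemma catInf_time_gt (j : ℕ) : (ρ.catInf ν).2 (ρ.len + 1 + j) = ρ.dur + ν.2 j := by
  show (if ρ.len + 1 + j ≤ ρ.len then _ else ρ.dur + ν.2 (ρ.len + 1 + j - ρ.len - 1)) = _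
  rw [if_neg (by omega)]
  have h : ρ.len + 1 + j - ρ.len - 1 = j := by omega
  rw [h]

lemma catInf_sym_gt (j : ℕ) : (ρ.catInf ν).1 (ρ.len + 1 + j) = ν.1 j := by
  show (if ρ.len + 1 + j ≤ ρ.len then _ else ν.1 (ρ.len + 1 + j - ρ.len - 1)) = _
  rw [if_neg (by omega)]
  have h : ρ.len + 1 + j - ρ.len - 1 = j := by omega
  rw [h]

lemma catInf_delay_le {i : ℕ} (hi : i ≤ ρ.len) :
    (ρ.catInf ν).2 i - prevT (ρ.catInf ν).2 i = ρ.time i - prevT ρ.time i := by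
  rcases Nat.eq_zero_or_pos i with h0 | h0
  · subst h0; rw [catInf_time_le hi]; simp [prevT]
  · have h1 : prevT (ρ.catInf ν).2 i = (ρ.catInf ν).2 (i - 1) := by
      simp only [prevT, if_neg (by omega : ¬ i = 0)]
    have h2 : prevT ρ.time i = ρ.time (i - 1) := by
      simp only [prevT, if_neg (by omega : ¬ i = 0)]
    rw [h1, h2, catInf_time_le hi, catInf_time_le (by omega : i - 1 ≤ ρ.len)]

lemma catInf_delay_gt (j : ℕ) :
    (ρ.catInf ν).2 (ρ.len + 1 + j) - prevT (ρ.catInf ν).2 (ρ.len + 1 + j)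
      = ν.2 j - prevT ν.2 j := by
  have h1 : prevT (ρ.catInf ν).2 (ρ.len + 1 + j) = (ρ.catInf ν).2 (ρ.len + j) := by
    simp only [prevT, if_neg (by omega : ¬ ρ.len + 1 + j = 0)]
    have h : ρ.len + 1 + j - 1 = ρ.len + j := by omega
    rw [h]
  rw [catInf_time_gt, h1]
  rcases Nat.eq_zero_or_pos j with h0 | h0
  · subst h0
    rw [catInf_time_le (by omega : ρ.len + 0 ≤ ρ.len)]
    simp [prevT, FinTW.dur]
  · have h2 : ρ.len + j = ρ.len + 1 + (j - 1) := by omega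
    rw [h2, catInf_time_gt]
    simp only [prevT, if_neg (by omega : ¬ j = 0)]
    ring

lemma isInfTW_catInf (hρ : IsFinTW ρ) (hν : IsInfTW ν) : IsInfTW (ρ.catInf ν) := by
  constructor
  · rw [catInf_time_le (Nat.zero_le _)]; exact hρ.1
  · apply strictMono_nat_of_lt_succ
    intro i
    rcases lt_trichotomy i ρ.len with h | h | h
    · rw [catInf_time_le (by omega), catInf_time_le (by omega)]
      exact hρ.2 i h
    · subst h
      rw [catInf_time_le le_rfl]
      have : ρ.len + 1 = ρ.len + 1 + 0 := rfl
      rw [this, catInf_time_gt]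
      have := hν.1
      show ρ.time ρ.len < ρ.dur + ν.2 0
      unfold FinTW.dur
      linarith
    · obtain ⟨j, rfl⟩ : ∃ j, i = ρ.len + 1 + j := ⟨i - ρ.len - 1, by omega⟩
      have : ρ.len + 1 + j + 1 = ρ.len + 1 + (j + 1) := by omega
      rw [this, catInf_time_gt, catInf_time_gt]
      have := hν.2 (by omega : j < j + 1)
      linarith

lemma catFin_len : (ρ.catFin ρ').len = ρ.len + 1 + ρ'.len := rfl

lemma catFin_sym_le {i : ℕ} (hi : i ≤ ρ.len) : (ρ.catFin ρ').sym i = ρ.sym i := if_pos hi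

lemma catFin_time_le {i : ℕ} (hi : i ≤ ρ.len) : (ρ.catFin ρ').time i = ρ.time i := if_pos hi

lemma catFin_time_gt (j : ℕ) : (ρ.catFin ρ').time (ρ.len + 1 + j) = ρ.dur + ρ'.time j := by
  show (if ρ.len + 1 + j ≤ ρ.len then _ else ρ.dur + ρ'.time (ρ.len + 1 + j - ρ.len - 1)) = _
  rw [if_neg (by omega)]
  have h : ρ.len + 1 + j - ρ.len - 1 = j := by omega
  rw [h]

lemma catFin_sym_gt (j : ℕ) : (ρ.catFin ρ').sym (ρ.len + 1 + j) = ρ'.sym j := by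
  show (if ρ.len + 1 + j ≤ ρ.len then _ else ρ'.sym (ρ.len + 1 + j - ρ.len - 1)) = _
  rw [if_neg (by omega)]
  have h : ρ.len + 1 + j - ρ.len - 1 = j := by omega
  rw [h]

lemma catFin_dur : (ρ.catFin ρ').dur = ρ.dur + ρ'.dur := by
  show (ρ.catFin ρ').time (ρ.len + 1 + ρ'.len) = _
  rw [catFin_time_gt]
  rfl

lemma catFin_delay_le {i : ℕ} (hi : i ≤ ρ.len) :
    (ρ.catFin ρ').time i - prevT (ρ.catFin ρ').time i = ρ.time i - prevT ρ.time i := by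
  rcases Nat.eq_zero_or_pos i with h0 | h0
  · subst h0; rw [catFin_time_le hi]; simp [prevT]
  · have h1 : prevT (ρ.catFin ρ').time i = (ρ.catFin ρ').time (i - 1) := by
      simp only [prevT, if_neg (by omega : ¬ i = 0)]
    have h2 : prevT ρ.time i = ρ.time (i - 1) := by
      simp only [prevT, if_neg (by omega : ¬ i = 0)]
    rw [h1, h2, catFin_time_le hi, catFin_time_le (by omega : i - 1 ≤ ρ.len)]

lemma catFin_delay_gt (j : ℕ) :
    (ρ.catFin ρ').time (ρ.len + 1 + j) - prevT (ρ.catFin ρ').time (ρ.len + 1 + j)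
      = ρ'.time j - prevT ρ'.time j := by
  have h1 : prevT (ρ.catFin ρ').time (ρ.len + 1 + j) = (ρ.catFin ρ').time (ρ.len + j) := by
    simp only [prevT, if_neg (by omega : ¬ ρ.len + 1 + j = 0)]
    have h : ρ.len + 1 + j - 1 = ρ.len + j := by omega
    rw [h]
  rw [catFin_time_gt, h1]
  rcases Nat.eq_zero_or_pos j with h0 | h0
  · subst h0
    rw [catFin_time_le (by omega : ρ.len + 0 ≤ ρ.len)]
    simp [prevT, FinTW.dur]
  · have h2 : ρ.len + j = ρ.len + 1 + (j - 1) := by omega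
    rw [h2, catFin_time_gt]
    simp only [prevT, if_neg (by omega : ¬ j = 0)]
    ring

lemma isFinTW_catFin (hρ : IsFinTW ρ) (hρ' : IsFinTW ρ') : IsFinTW (ρ.catFin ρ') := by
  constructor
  · rw [catFin_time_le (Nat.zero_le _)]; exact hρ.1
  · intro i hi
    rw [catFin_len] at hi
    rcases lt_trichotomy i ρ.len with h | h | h
    · rw [catFin_time_le (by omega), catFin_time_le (by omega)]
      exact hρ.2 i h
    · subst h
      rw [catFin_time_le le_rfl]
      have : ρ.len + 1 = ρ.len + 1 + 0 := rfl
      rw [this, catFin_time_gt]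
      have := hρ'.1
      show ρ.time ρ.len < ρ.dur + ρ'.time 0
      unfold FinTW.dur
      linarith
    · obtain ⟨j, rfl⟩ : ∃ j, i = ρ.len + 1 + j := ⟨i - ρ.len - 1, by omega⟩
      have hj : j < ρ'.len := by omega
      have : ρ.len + 1 + j + 1 = ρ.len + 1 + (j + 1) := by omega
      rw [this, catFin_time_gt, catFin_time_gt]
      have := hρ'.2 j hj
      linarith

lemma catFin_catInf_assoc : (ρ.catFin ρ').catInf μ = ρ.catInf (ρ'.catInf μ) := by
  have hlen : (ρ.catFin ρ').len = ρ.len + 1 + ρ'.len := rfl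
  apply Prod.ext
  · funext i
    show (if i ≤ (ρ.catFin ρ').len then (ρ.catFin ρ').sym i else μ.1 (i - (ρ.catFin ρ').len - 1))
      = (if i ≤ ρ.len then ρ.sym i else (ρ'.catInf μ).1 (i - ρ.len - 1))
    rw [hlen]
    rcases le_or_gt i ρ.len with h | h
    · rw [if_pos (show i ≤ ρ.len + 1 + ρ'.len by omega), if_pos h, catFin_sym_le h]
    · rw [if_neg (show ¬ i ≤ ρ.len by omega)]
      rcases le_or_gt i (ρ.len + 1 + ρ'.len) with h2 | h2
      · obtain ⟨j, rfl⟩ : ∃ j, i = ρ.len + 1 + j := ⟨i - ρ.len - 1, by omega⟩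
        rw [if_pos h2, catFin_sym_gt]
        have hj : ρ.len + 1 + j - ρ.len - 1 = j := by omega
        rw [hj, catInf_sym_le (show j ≤ ρ'.len by omega)]
      · rw [if_neg (show ¬ i ≤ ρ.len + 1 + ρ'.len by omega)]
        show _ = (if i - ρ.len - 1 ≤ ρ'.len then ρ'.sym (i - ρ.len - 1)
          else μ.1 (i - ρ.len - 1 - ρ'.len - 1))
        rw [if_neg (show ¬ i - ρ.len - 1 ≤ ρ'.len by omega)]
        have hj : i - (ρ.len + 1 + ρ'.len) - 1 = i - ρ.len - 1 - ρ'.len - 1 := by omega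
        rw [hj]
  · funext i
    show (if i ≤ (ρ.catFin ρ').len then (ρ.catFin ρ').time i
        else (ρ.catFin ρ').dur + μ.2 (i - (ρ.catFin ρ').len - 1))
      = (if i ≤ ρ.len then ρ.time i else ρ.dur + (ρ'.catInf μ).2 (i - ρ.len - 1))
    rw [hlen, catFin_dur]
    rcases le_or_gt i ρ.len with h | h
    · rw [if_pos (show i ≤ ρ.len + 1 + ρ'.len by omega), if_pos h, catFin_time_le h]
    · rw [if_neg (show ¬ i ≤ ρ.len by omega)]
      rcases le_or_gt i (ρ.len + 1 + ρ'.len) with h2 | h2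
      · obtain ⟨j, rfl⟩ : ∃ j, i = ρ.len + 1 + j := ⟨i - ρ.len - 1, by omega⟩
        rw [if_pos h2, catFin_time_gt]
        have hj : ρ.len + 1 + j - ρ.len - 1 = j := by omega
        rw [hj, catInf_time_le (show j ≤ ρ'.len by omega)]
      · rw [if_neg (show ¬ i ≤ ρ.len + 1 + ρ'.len by omega)]
        show _ = ρ.dur + (if i - ρ.len - 1 ≤ ρ'.len then ρ'.time (i - ρ.len - 1)
          else ρ'.dur + μ.2 (i - ρ.len - 1 - ρ'.len - 1))
        rw [if_neg (show ¬ i - ρ.len - 1 ≤ ρ'.len by omega)]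
        have hj : i - (ρ.len + 1 + ρ'.len) - 1 = i - ρ.len - 1 - ρ'.len - 1 := by omega
        rw [hj, add_assoc]

end CatLemmas

section RunLemmas

variable {α Q C : Type} {A : TBA α Q C} {ρ ρ' : FinTW α} {ν μ : InfTW α}

/-- Gluing a finite run and an infinite run. -/
def glueInf (r rν : ℕ → TState Q C) (ρ : FinTW α) : ℕ → TState Q C :=
  fun i => if i ≤ ρ.len then r i else rν (i - ρ.len - 1)

lemma glueInf_le {r rν : ℕ → TState Q C} {i : ℕ} (hi : i ≤ ρ.len) :
    glueInf r rν ρ i = r i := if_pos hi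

lemma glueInf_gt {r rν : ℕ → TState Q C} (j : ℕ) :
    glueInf r rν ρ (ρ.len + 1 + j) = rν j := by
  unfold glueInf
  rw [if_neg (by omega)]
  have h : ρ.len + 1 + j - ρ.len - 1 = j := by omega
  rw [h]

lemma infRun_glue {r rν : ℕ → TState Q C} (hr : A.FinRun ρ r) (hrν : A.InfRun ν rν)
    (hend : r (ρ.len + 1) = rν 0) : A.InfRun (ρ.catInf ν) (glueInf r rν ρ) := by
  intro i
  rcases le_or_gt i ρ.len with h | h
  · rw [glueInf_le h, catInf_sym_le h, catInf_delay_le h]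
    rcases lt_or_eq_of_le h with h2 | h2
    · rw [show i + 1 = i + 1 from rfl, glueInf_le (by omega : i + 1 ≤ ρ.len)]
      exact hr i h
    · subst h2
      have hg : glueInf r rν ρ (ρ.len + 1) = rν 0 := by
        have h3 : ρ.len + 1 = ρ.len + 1 + 0 := rfl
        rw [h3, glueInf_gt]
      rw [hg, ← hend]
      exact hr ρ.len h
  · obtain ⟨j, rfl⟩ : ∃ j, i = ρ.len + 1 + j := ⟨i - ρ.len - 1, by omega⟩
    rw [glueInf_gt, catInf_sym_gt, catInf_delay_gt]
    have h4 : ρ.len + 1 + j + 1 = ρ.len + 1 + (j + 1) := by omega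
    rw [h4, glueInf_gt]
    exact hrν j

/-- Extending a language membership by a finite run prefix. -/
lemma lang_glue (hρ : IsFinTW ρ) {r : ℕ → TState Q C} (hr : A.FinRun ρ r)
    (hν : ν ∈ A.Lang (r (ρ.len + 1))) : ρ.catInf ν ∈ A.Lang (r 0) := by
  obtain ⟨hνTW, rν, hrν0, hrνrun, q, hqF, hqinf⟩ := hν
  refine ⟨isInfTW_catInf hρ hνTW, glueInf r rν ρ, glueInf_le (Nat.zero_le _), ?_, q, hqF, ?_⟩
  · exact infRun_glue hr hrνrun (by rw [hrν0])
  · intro n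
    obtain ⟨m, hm, hq⟩ := hqinf n
    exact ⟨ρ.len + 1 + m, by omega, by rw [glueInf_gt]; exact hq⟩

/-- Splitting a language membership along a finite run prefix (determinism). -/
lemma lang_split (hdet : A.Deterministic) (hρ : IsFinTW ρ) {r : ℕ → TState Q C}
    (hr : A.FinRun ρ r) (hνTW : IsInfTW ν) (h : ρ.catInf ν ∈ A.Lang (r 0)) :
    ν ∈ A.Lang (r (ρ.len + 1)) := by
  obtain ⟨hTW, R, hR0, hRrun, q, hqF, hqinf⟩ := h
  have hpre : ∀ i ≤ ρ.len + 1, R i = r i := by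
    intro i hi
    induction i with
    | zero => exact hR0
    | succ n ih =>
      have hn : n ≤ ρ.len := by omega
      have s1 := hRrun n
      rw [catInf_sym_le hn, catInf_delay_le hn, ih (by omega)] at s1
      exact step_unique hdet (delay_pos hρ hn) s1 (hr n hn)
  refine ⟨hνTW, fun j => R (ρ.len + 1 + j), by rw [← hpre (ρ.len + 1) le_rfl], ?_, q, hqF, ?_⟩
  · intro j
    have := hRrun (ρ.len + 1 + j)
    rw [catInf_sym_gt, catInf_delay_gt] at this
    have h4 : ρ.len + 1 + j + 1 = ρ.len + 1 + (j + 1) := by omega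
    rw [h4] at this
    exact this
  · intro n
    obtain ⟨m, hm, hq⟩ := hqinf (ρ.len + 1 + n)
    refine ⟨m - ρ.len - 1, by omega, ?_⟩
    show (R (ρ.len + 1 + (m - ρ.len - 1))).1 = q
    have hm2 : ρ.len + 1 + (m - ρ.len - 1) = m := by omega
    rw [hm2]
    exact hq

/-- Gluing two finite runs. -/
lemma finRun_glue {r r' : ℕ → TState Q C} (hr : A.FinRun ρ r) (hr' : A.FinRun ρ' r')
    (hend : r (ρ.len + 1) = r' 0) : A.FinRun (ρ.catFin ρ') (glueInf r r' ρ) := by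
  intro i hi
  rw [catFin_len] at hi
  rcases le_or_gt i ρ.len with h | h
  · rw [glueInf_le h, catFin_sym_le h, catFin_delay_le h]
    rcases lt_or_eq_of_le h with h2 | h2
    · rw [glueInf_le (by omega : i + 1 ≤ ρ.len)]
      exact hr i h
    · subst h2
      have hg : glueInf r r' ρ (ρ.len + 1) = r' 0 := by
        have h3 : ρ.len + 1 = ρ.len + 1 + 0 := rfl
        rw [h3, glueInf_gt]
      rw [hg, ← hend]
      exact hr ρ.len h
  · obtain ⟨j, rfl⟩ : ∃ j, i = ρ.len + 1 + j := ⟨i - ρ.len - 1, by omega⟩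
    rw [glueInf_gt, catFin_sym_gt, catFin_delay_gt]
    have h4 : ρ.len + 1 + j + 1 = ρ.len + 1 + (j + 1) := by omega
    rw [h4, glueInf_gt]
    exact hr' j (by omega)

lemma glueInf_end {r r' : ℕ → TState Q C} :
    glueInf r r' ρ ((ρ.catFin ρ').len + 1) = r' (ρ'.len + 1) := by
  rw [catFin_len]
  have h : ρ.len + 1 + ρ'.len + 1 = ρ.len + 1 + (ρ'.len + 1) := by omega
  rw [h, glueInf_gt]

/-- Divergence transfers forward along concatenation. -/
lemma tendsto_catInf_of (hμ : Tendsto μ.2 atTop atTop) :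
    Tendsto (ρ.catInf μ).2 atTop atTop := by
  rw [tendsto_atTop_atTop]
  intro b
  rw [tendsto_atTop_atTop] at hμ
  obtain ⟨N, hN⟩ := hμ (b - ρ.dur)
  refine ⟨ρ.len + 1 + N, fun i hi => ?_⟩
  obtain ⟨j, rfl⟩ : ∃ j, i = ρ.len + 1 + j := ⟨i - ρ.len - 1, by omega⟩
  rw [catInf_time_gt]
  have := hN j (by omega)
  linarith

/-- Divergence transfers backward along concatenation. -/
lemma tendsto_of_catInf (h : Tendsto (ρ.catInf μ).2 atTop atTop) :
    Tendsto μ.2 atTop atTop := by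
  rw [tendsto_atTop_atTop]
  intro b
  rw [tendsto_atTop_atTop] at h
  obtain ⟨N, hN⟩ := h (b + ρ.dur)
  refine ⟨N, fun j hj => ?_⟩
  have := hN (ρ.len + 1 + j) (by omega)
  rw [catInf_time_gt] at this
  linarith

/-- The single-letter finite timed word. -/
def single (a : α) (d : ℝ) : FinTW α := ⟨0, fun _ => a, fun _ => d⟩

lemma isFinTW_single {a : α} {d : ℝ} (hd : 0 < d) : IsFinTW (single a d) :=
  ⟨hd, fun i hi => by simp [single] at hi⟩

lemma single_dur {a : α} {d : ℝ} : (single a d).dur = d := rfl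

lemma finRun_single {s s' : TState Q C} {a : α} {d : ℝ}
    (h : A.step s d a s') : A.FinRun (single a d) (fun i => if i = 0 then s else s') := by
  intro i hi
  have hi0 : i = 0 := by simpa [single] using hi
  subst hi0
  simpa [single, prevT] using h

/-- A finite run yields a chain of timed steps. -/
lemma finRun_chain (hρ : IsFinTW ρ) {r : ℕ → TState Q C} (hr : A.FinRun ρ r) :
    Relation.ReflTransGen A.stepT (r 0, 0) (r (ρ.len + 1), ρ.dur) := by
  have key : ∀ k ≤ ρ.len + 1, Relation.ReflTransGen A.stepT (r 0, 0) (r k, prevT ρ.time k) := by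
    intro k hk
    induction k with
    | zero =>
      simp only [prevT, if_pos rfl]
      exact Relation.ReflTransGen.refl
    | succ n ih =>
      have hn : n ≤ ρ.len := by omega
      refine Relation.ReflTransGen.tail (ih (by omega)) ?_
      refine ⟨ρ.time n - prevT ρ.time n, delay_pos hρ hn, ⟨ρ.sym n, hr n hn⟩, ?_⟩
      show prevT ρ.time (n + 1) = prevT ρ.time n + (ρ.time n - prevT ρ.time n)
      have h1 : prevT ρ.time (n + 1) = ρ.time n := by
        simp only [prevT, if_neg (Nat.succ_ne_zero n)]
        rfl
      rw [h1]; ring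
  have := key (ρ.len + 1) le_rfl
  have h1 : prevT ρ.time (ρ.len + 1) = ρ.dur := by
    simp only [prevT, if_neg (Nat.succ_ne_zero _)]
    rfl
  rwa [h1] at this

/-- A chain of timed steps yields a finite timed word and run (or is trivial). -/
lemma chain_reach {s : TState Q C} {p : TState Q C × ℝ}
    (hchain : Relation.ReflTransGen A.stepT (s, 0) p) :
    p = (s, 0) ∨ ∃ (ρc : FinTW α) (r : ℕ → TState Q C), IsFinTW ρc ∧ A.FinRun ρc r ∧
      r 0 = s ∧ r (ρc.len + 1) = p.1 ∧ ρc.dur = p.2 := by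
  induction hchain with
  | refl => exact Or.inl rfl
  | @tail m c hmc hstep ih =>
    obtain ⟨d, hd, ⟨a, hstepa⟩, hc2⟩ := hstep
    right
    rcases ih with heq | ⟨ρc, r, hρc, hrun, hr0, hrend, hdur⟩
    · refine ⟨single a d, fun i => if i = 0 then s else c.1, isFinTW_single hd, ?_, rfl, rfl, ?_⟩
      · apply finRun_single
        rw [heq] at hstepa
        exact hstepa
      · rw [single_dur, hc2, heq]
        simp
    · refine ⟨ρc.catFin (single a d),
        glueInf r (fun j => if j = 0 then m.1 else c.1) ρc,
        isFinTW_catFin hρc (isFinTW_single hd), ?_, ?_, ?_, ?_⟩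
      · apply finRun_glue hrun (finRun_single hstepa)
        rw [hrend]
        simp
      · rw [glueInf_le (Nat.zero_le _)]; exact hr0
      · rw [glueInf_end]
        simp
      · rw [catFin_dur, single_dur, hdur, hc2]

end RunLemmas

/-! ## Statement 6 -/

theorem stmt6 {α Q C : Type} [Finite α] [Nonempty α] [Finite Q] [Finite C]
    (φ : Set (InfTW α)) (hφ : ∀ μ ∈ φ, IsInfTW μ)
    (A : TBA α Q C) (hfin : A.trans.Finite) (hcomp : A.Complete)
    (hdet : A.Deterministic) (hinit : ∃ q0, A.init = {q0})
    (hL : A.LangInit = φ ∩ {μ | IsDivergent μ})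
    (ρ : FinTW α) (hρ : IsFinTW ρ) :
    A.dSet (A.Terminal ρ) = Dbar φ ρ := by
  classical
  obtain ⟨q0, hq0⟩ := hinit
  set s0 : TState Q C := (q0, fun _ => 0) with hs0
  have hrρ : A.FinRun ρ (runFrom A s0 ρ) := runFrom_isRun hcomp hρ s0
  set sρ : TState Q C := runFrom A s0 ρ (ρ.len + 1) with hsρ
  have hTerm : A.Terminal ρ = {sρ} := by
    ext s
    simp only [Set.mem_singleton_iff]
    constructor
    · rintro ⟨r, hr0i, hr0v, hrun, hrend⟩
      have h0 : r 0 = s0 := by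
        apply Prod.ext
        · rw [hq0] at hr0i; exact hr0i
        · funext c; exact hr0v c
      have huniq := finRun_unique hdet hρ hrun hrρ (by rw [h0, runFrom_zero]) (ρ.len + 1) le_rfl
      rw [← hrend, huniq]
    · intro hs
      subst hs
      exact ⟨runFrom A s0 ρ, by rw [hq0]; exact rfl, fun c => rfl, hrρ, rfl⟩
  rw [hTerm]
  have hsup : A.dSet {sρ} = A.dState sρ := by
    simp [TBA.dSet]
  rw [hsup]
  apply le_antisymm
  · -- dState sρ ≤ Dbar φ ρ
    refine le_sInf ?_
    rintro c ⟨ρ', hρ', hprop, rfl⟩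
    apply sInf_le
    have hr' : A.FinRun ρ' (runFrom A sρ ρ') := runFrom_isRun hcomp hρ' sρ
    set s'' : TState Q C := runFrom A sρ ρ' (ρ'.len + 1) with hs''
    refine ⟨s'', ρ'.dur, 0, finRun_chain hρ' hr', le_refl 0, ?_, by rw [add_zero]⟩
    rintro ⟨μ, hμ⟩
    have hfix : ((s''.1, fun x => s''.2 x + 0) : TState Q C) = s'' := by
      apply Prod.ext
      · rfl
      · funext x
        show s''.2 x + 0 = s''.2 x
        rw [add_zero]
    rw [hfix] at hμ
    have hglue : A.FinRun (ρ.catFin ρ') (glueInf (runFrom A s0 ρ) (runFrom A sρ ρ') ρ) :=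
      finRun_glue hrρ hr' rfl
    have hcat : IsFinTW (ρ.catFin ρ') := isFinTW_catFin hρ hρ'
    have hμ' : μ ∈ A.Lang (glueInf (runFrom A s0 ρ) (runFrom A sρ ρ') ρ
        ((ρ.catFin ρ').len + 1)) := by
      rw [glueInf_end]; exact hμ
    have hw := lang_glue hcat hglue hμ'
    rw [glueInf_le (Nat.zero_le _)] at hw
    have hwI : (ρ.catFin ρ').catInf μ ∈ A.LangInit := ⟨q0, by rw [hq0]; exact rfl, hw⟩
    rw [hL] at hwI
    obtain ⟨hwφ, hwdiv⟩ := hwI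
    have hμdiv : IsDivergent μ := ⟨hμ.1, tendsto_of_catInf hwdiv.2⟩
    exact hprop μ hμdiv hwφ
  · -- Dbar φ ρ ≤ dState sρ
    refine le_sInf ?_
    rintro c ⟨s', t, d, hchain, hd0, hne, rfl⟩
    have ht0 : 0 ≤ t := by
      rcases chain_reach hchain with heq | ⟨ρc, r, hρc, _, _, _, hdur⟩
      · have : t = 0 := congrArg Prod.snd heq
        rw [this]
      · have hdt : ρc.dur = t := hdur
        rw [← hdt]; exact le_of_lt (dur_pos hρc)
    refine ENNReal.le_of_forall_pos_le_add fun ε hε _ => ?_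
    have hεR : (0 : ℝ) < ↑ε := by exact_mod_cast hε
    set a0 : α := Classical.arbitrary α
    have hδ : (0 : ℝ) < d + ↑ε := by linarith
    set s'' : TState Q C := A.nxt s' (d + ↑ε) a0 with hs''def
    have hstep'' : A.step s' (d + ↑ε) a0 s'' := TBA.nxt_step hcomp s' a0 hδ
    have hbuild : ∃ (ρ'' : FinTW α) (r'' : ℕ → TState Q C), IsFinTW ρ'' ∧ A.FinRun ρ'' r'' ∧
        r'' 0 = sρ ∧ r'' (ρ''.len + 1) = s'' ∧ ρ''.dur = t + (d + ↑ε) := by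
      rcases chain_reach hchain with heq | ⟨ρc, r, hρc, hrun, hr0, hrend, hdur⟩
      · have hs' : s' = sρ := congrArg Prod.fst heq
        have ht : t = 0 := congrArg Prod.snd heq
        refine ⟨single a0 (d + ↑ε), fun i => if i = 0 then sρ else s'', isFinTW_single hδ,
          finRun_single (by rw [← hs']; exact hstep''), rfl, by simp, ?_⟩
        rw [single_dur, ht, zero_add]
      · refine ⟨ρc.catFin (single a0 (d + ↑ε)),
          glueInf r (fun j => if j = 0 then s' else s'') ρc,
          isFinTW_catFin hρc (isFinTW_single hδ), ?_, ?_, ?_, ?_⟩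
        · refine finRun_glue hrun (finRun_single ?_) (by rw [hrend]; simp)
          exact hstep''
        · rw [glueInf_le (Nat.zero_le _)]; exact hr0
        · rw [glueInf_end]; simp
        · rw [catFin_dur, single_dur, hdur]
    obtain ⟨ρ'', r'', hρ'', hr'', hr''0, hr''end, hdur''⟩ := hbuild
    have hmem : ENNReal.ofReal (t + (d + ↑ε)) ∈ {c | ∃ ρ' : FinTW α, IsFinTW ρ' ∧
        (∀ μ, IsDivergent μ → (ρ.catFin ρ').catInf μ ∉ φ) ∧ c = ENNReal.ofReal ρ'.dur} := by
      refine ⟨ρ'', hρ'', ?_, by rw [hdur'']⟩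
      intro μ hμdiv hwφ
      have hwTW : IsInfTW ((ρ.catFin ρ'').catInf μ) :=
        isInfTW_catInf (isFinTW_catFin hρ hρ'') hμdiv.1
      have hwdiv : IsDivergent ((ρ.catFin ρ'').catInf μ) := ⟨hwTW, tendsto_catInf_of hμdiv.2⟩
      have hwI : (ρ.catFin ρ'').catInf μ ∈ A.LangInit := by rw [hL]; exact ⟨hwφ, hwdiv⟩
      obtain ⟨q, hqi, hqL⟩ := hwI
      have hq : q = q0 := by rw [hq0] at hqi; exact hqi
      subst hq
      rw [catFin_catInf_assoc] at hqL
      have h1 : ρ''.catInf μ ∈ A.Lang sρ :=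
        lang_split hdet hρ hrρ (isInfTW_catInf hρ'' hμdiv.1) hqL
      have h2 : μ ∈ A.Lang s'' := by
        have h2' := lang_split hdet hρ'' hr'' hμdiv.1 (by rw [hr''0]; exact h1)
        rw [hr''end] at h2'
        exact h2'
      have hstepε : A.step ((s'.1, fun x => s'.2 x + d) : TState Q C) (↑ε) a0 s'' := by
        obtain ⟨tr, htr, hsrc, hdst, hsym, hg, hres, hnres⟩ := hstep''
        refine ⟨tr, htr, hsrc, hdst, hsym, ?_, hres, ?_⟩
        · have heq : (fun c => ((s'.1, fun x => s'.2 x + d) : TState Q C).2 c + (↑ε : ℝ))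
              = (fun c => s'.2 c + (d + ↑ε)) := by
            funext c
            show s'.2 c + d + ↑ε = _
            ring
          rw [heq]
          exact hg
        · intro c hc
          rw [hnres c hc]
          show s'.2 c + (d + ↑ε) = s'.2 c + d + ↑ε
          ring
      have hNE : ((s'.1, fun x => s'.2 x + d) : TState Q C) ∈ A.NonEmptySt := by
        refine ⟨(single a0 ↑ε).catInf μ, ?_⟩
        have hrun1 : A.FinRun (single a0 ↑ε)
            (fun i => if i = 0 then ((s'.1, fun x => s'.2 x + d) : TState Q C) else s'') :=
          finRun_single hstepε
        have hμ1 : μ ∈ A.Lang ((fun i => if i = 0 then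
            ((s'.1, fun x => s'.2 x + d) : TState Q C) else s'') ((single a0 (↑ε : ℝ)).len + 1)) := by
          simp only [single]
          exact h2
        exact lang_glue (isFinTW_single hεR) hrun1 hμ1
      exact hne hNE
    calc Dbar φ ρ ≤ ENNReal.ofReal (t + (d + ↑ε)) := sInf_le hmem
      _ = ENNReal.ofReal (t + d) + ↑ε := by
          rw [show t + (d + (↑ε : ℝ)) = (t + d) + (↑ε : ℝ) by ring,
            ENNReal.ofReal_add (by linarith) (by positivity), ENNReal.ofReal_coe_nnreal]
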